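/- arXiv:1311.5056 — 2 statements merged into one kernel-verified Lean document; each statement's English description precedes it below -/
import Mathlib

section
/- Every 2-partite digraph that is not bipartite and is homogeneous is isomorphic to one of: M_κ for some cardinal κ ≥ 2; a generic 2-partite digraph; or a generic orientation of a generic bipartite graph. -/
/-- A 2-partite digraph `D = (X, Y, E)`: `X` and `Y` are disjoint sets covering the
vertex set, every edge goes between the two sides, and no two opposite edges exist. -/
structure TwoPartiteDigraph (V : Type*) where
  X : Set V
  Y : Set V
  cover : X ∪ Y = Set.univ
  disj : Disjoint X Y
  E : V → V → Prop
  mem_of_edge : ∀ u v, E u v → (u ∈ X ∧ v ∈ Y) ∨ (u ∈ Y ∧ v ∈ X)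
  not_opposite : ∀ u v, E u v → ¬ E v u

namespace TwoPartiteDigraph

variable {V V₁ V₂ : Type*}

/-- Out-neighbourhood (successors). -/
def Nplus (D : TwoPartiteDigraph V) (v : V) : Set V := {w | D.E v w}

/-- In-neighbourhood (predecessors). -/
def Nminus (D : TwoPartiteDigraph V) (v : V) : Set V := {w | D.E w v}

/-- Adjacency in the underlying undirected bipartite graph. -/
def Adj (D : TwoPartiteDigraph V) (u v : V) : Prop := D.E u v ∨ D.E v u

/-- `v^⊥`: the vertices on the other side not adjacent to `v`. -/
def perp (D : TwoPartiteDigraph V) (v : V) : Set V :=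
  {w | ((v ∈ D.X ∧ w ∈ D.Y) ∨ (v ∈ D.Y ∧ w ∈ D.X)) ∧ ¬ D.Adj v w}

/-- `D` is bipartite if all edges go from `X` to `Y`, or all from `Y` to `X`. -/
def Bipartite (D : TwoPartiteDigraph V) : Prop :=
  (∀ u v, D.E u v → u ∈ D.X) ∨ (∀ u v, D.E u v → u ∈ D.Y)

/-- `φ` is an isomorphism between the subdigraphs induced on `A` and on `φ '' A`,
respecting the bipartition. -/
def IsPartialIso (D : TwoPartiteDigraph V) (A : Set V) (φ : V → V) : Prop :=
  Set.InjOn φ A ∧ (∀ a ∈ A, (a ∈ D.X ↔ φ a ∈ D.X)) ∧ (∀ a ∈ A, (a ∈ D.Y ↔ φ a ∈ D.Y)) ∧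
  ∀ a ∈ A, ∀ b ∈ A, (D.E a b ↔ D.E (φ a) (φ b))

/-- A bipartition-preserving automorphism of `D`. -/
def IsAuto (D : TwoPartiteDigraph V) (α : Equiv.Perm V) : Prop :=
  (∀ v, v ∈ D.X ↔ α v ∈ D.X) ∧ (∀ v, v ∈ D.Y ↔ α v ∈ D.Y) ∧
  ∀ u v, D.E u v ↔ D.E (α u) (α v)

/-- `D` is homogeneous: every isomorphism between finite induced subdigraphs respecting
the bipartition extends to a bipartition-preserving automorphism of `D`. -/
def Homogeneous (D : TwoPartiteDigraph V) : Prop :=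
  ∀ A : Set V, A.Finite → ∀ φ : V → V, D.IsPartialIso A φ →
    ∃ α : Equiv.Perm V, D.IsAuto α ∧ ∀ a ∈ A, α a = φ a

/-- The underlying undirected bipartite graph is complete bipartite. -/
def CompleteBip (D : TwoPartiteDigraph V) : Prop := ∀ x ∈ D.X, ∀ y ∈ D.Y, D.Adj x y

/-- `D` is a generic 2-partite digraph. -/
def IsGeneric (D : TwoPartiteDigraph V) : Prop :=
  D.CompleteBip ∧
  ∀ AX BX : Set V, AX.Finite → BX.Finite → AX ⊆ D.X → BX ⊆ D.X → Disjoint AX BX →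
  ∀ AY BY : Set V, AY.Finite → BY.Finite → AY ⊆ D.Y → BY ⊆ D.Y → Disjoint AY BY →
    (∃ y ∈ D.Y, AX ⊆ D.Nplus y ∧ BX ⊆ D.Nminus y) ∧
    (∃ x ∈ D.X, AY ⊆ D.Nplus x ∧ BY ⊆ D.Nminus x)

/-- `D` is a generic orientation of a generic bipartite graph. -/
def IsGenericOrientation (D : TwoPartiteDigraph V) : Prop :=
  ∀ AX BX CX : Set V, AX.Finite → BX.Finite → CX.Finite →
    AX ⊆ D.X → BX ⊆ D.X → CX ⊆ D.X →
    Disjoint AX BX → Disjoint AX CX → Disjoint BX CX →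
  ∀ AY BY CY : Set V, AY.Finite → BY.Finite → CY.Finite →
    AY ⊆ D.Y → BY ⊆ D.Y → CY ⊆ D.Y →
    Disjoint AY BY → Disjoint AY CY → Disjoint BY CY →
    (∃ y ∈ D.Y, AX ⊆ D.Nplus y ∧ BX ⊆ D.Nminus y ∧ CX ⊆ D.perp y) ∧
    (∃ x ∈ D.X, AY ⊆ D.Nplus x ∧ BY ⊆ D.Nminus x ∧ CY ⊆ D.perp x)

/-- `D` is (a copy of) `M_κ` with the matching oriented from `X` to `Y`:
there is a bijection `m : X → Y` such that the edges from `X` to `Y` form the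
perfect matching `{(x, m x)}` and the edges from `Y` to `X` form its bipartite
complement. -/
def IsMFixed (D : TwoPartiteDigraph V) : Prop :=
  ∃ m : V → V, Set.BijOn m D.X D.Y ∧
    (∀ x ∈ D.X, ∀ y ∈ D.Y, (D.E x y ↔ y = m x)) ∧
    (∀ x ∈ D.X, ∀ y ∈ D.Y, (D.E y x ↔ y ≠ m x))

/-- `D` is (a copy of) `M_κ`: one of the two directed parts is a perfect matching and
the other is the bipartite complement of a perfect matching. -/
def IsM (D : TwoPartiteDigraph V) : Prop :=
  ∃ m : V → V, Set.BijOn m D.X D.Y ∧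
    ((∀ x ∈ D.X, ∀ y ∈ D.Y, (D.E x y ↔ y = m x) ∧ (D.E y x ↔ y ≠ m x)) ∨
     (∀ x ∈ D.X, ∀ y ∈ D.Y, (D.E y x ↔ y = m x) ∧ (D.E x y ↔ y ≠ m x)))

/-- Isomorphism of 2-partite digraphs respecting the bipartitions. -/
def Isomorphic (D₁ : TwoPartiteDigraph V₁) (D₂ : TwoPartiteDigraph V₂) : Prop :=
  ∃ e : V₁ ≃ V₂, (∀ v, v ∈ D₁.X ↔ e v ∈ D₂.X) ∧ (∀ v, v ∈ D₁.Y ↔ e v ∈ D₂.Y) ∧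
    ∀ u v, D₁.E u v ↔ D₂.E (e u) (e v)

/-- `φ` is an isomorphism of finite induced subgraphs of the underlying undirected
bipartite graph, respecting the bipartition. -/
def IsGraphPartialIso (D : TwoPartiteDigraph V) (A : Set V) (φ : V → V) : Prop :=
  Set.InjOn φ A ∧ (∀ a ∈ A, (a ∈ D.X ↔ φ a ∈ D.X)) ∧ (∀ a ∈ A, (a ∈ D.Y ↔ φ a ∈ D.Y)) ∧
  ∀ a ∈ A, ∀ b ∈ A, (D.Adj a b ↔ D.Adj (φ a) (φ b))

/-- The underlying undirected bipartite graph of `D` is homogeneous. -/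
def GraphHomogeneous (D : TwoPartiteDigraph V) : Prop :=
  ∀ A : Set V, A.Finite → ∀ φ : V → V, D.IsGraphPartialIso A φ →
    ∃ α : Equiv.Perm V, ((∀ v, v ∈ D.X ↔ α v ∈ D.X) ∧ (∀ v, v ∈ D.Y ↔ α v ∈ D.Y) ∧
      ∀ u v, D.Adj u v ↔ D.Adj (α u) (α v)) ∧ ∀ a ∈ A, α a = φ a

/-- The underlying undirected bipartite graph of `D` is generic. -/
def UnderlyingGeneric (D : TwoPartiteDigraph V) : Prop :=
  ∀ UX VX : Set V, UX.Finite → VX.Finite → UX ⊆ D.X → VX ⊆ D.X → Disjoint UX VX →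
  ∀ UY VY : Set V, UY.Finite → VY.Finite → UY ⊆ D.Y → VY ⊆ D.Y → Disjoint UY VY →
    (∃ y ∈ D.Y, (∀ u ∈ UX, D.Adj y u) ∧ ∀ v ∈ VX, ¬ D.Adj y v) ∧
    (∃ x ∈ D.X, (∀ u ∈ UY, D.Adj x u) ∧ ∀ v ∈ VY, ¬ D.Adj x v)

end TwoPartiteDigraph

open TwoPartiteDigraph

/-!
For `y ∈ Y`, each `x ∈ X` is an out-neighbour, an in-neighbour or a non-neighbour of `y`: its
link to `y`. Homogeneity makes the automorphism group highly transitive on `X` and on `Y`, so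
whether a finite pattern of links on `X` is realized by some `y ∈ Y` depends only on the shape of
the pattern. If at least two links occur twice at some vertex of `Y`, then every pattern made of
links occurring twice is realized, by induction on its size. For a smallest unrealized pattern
using two links `p a ≠ p b`, realizers of the pattern without `a` and without `b` have
`p a`-neighbourhoods of different sizes, contradicting transitivity on `Y`. For a constant pattern
of size `n + 1 ≥ 3`, the realizers of `n`-sets have exactly these `n`-sets as neighbourhoods; two
pairs of them meet in `n - 1` and in `n - 2` points, contradicting 2-transitivity on `Y`, unless
`|X| = n + 1`, where a second link could only occur once.

Non-bipartiteness makes both orientations occur. If the digraph is not complete bipartite,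
non-adjacency occurs too, and an automorphism fixing one vertex of `Y` and moving another shows
that each of the three links then occurs twice, on both sides. In the complete case the same
argument turns a vertex of `X` with two out-neighbours into a vertex of `Y` with two
in-neighbours; and if on one side every vertex has a single out-neighbour, these out-neighbours
form a perfect matching, which is `M_κ`.
-/

theorem Set.exists_three_subsets_encard_eq {α : Type*} {s : Set α} {n : ℕ} (hn : 2 ≤ n)
    (hs : n + 1 < s.encard) :
    ∃ T₁ ⊆ s, ∃ T₂ ⊆ s, ∃ T₃ ⊆ s, T₁.encard = n ∧ T₂.encard = n ∧ T₃.encard = n ∧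
      T₁ ≠ T₂ ∧ T₁ ≠ T₃ ∧ (T₁ ∩ T₃).encard < (T₁ ∩ T₂).encard := by
  obtain ⟨T₁, hT₁s, hT₁⟩ := Set.exists_subset_encard_eq (k := n) (le_self_add.trans hs.le)
  obtain ⟨t₁, t₂, ht₁, ht₂, ht₁₂⟩ :=
    Set.one_lt_encard_iff.1 (by rw [hT₁]; exact_mod_cast (by omega : 1 < n))
  have hcompl : 1 < (s \ T₁).encard := by
    by_contra h
    refine hs.not_ge ?_
    rw [← Set.encard_sdiff_add_encard_of_subset hT₁s, hT₁, add_comm (n : ℕ∞) 1]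
    gcongr
    exact not_lt.1 h
  obtain ⟨u, v, hu, hv, huv⟩ := Set.one_lt_encard_iff.1 hcompl
  set T₂ := insert u (T₁ \ {t₁})
  set T₃ := insert v (T₂ \ {t₂})
  have ht₁T₂ : t₁ ∉ T₂ := by
    rintro (h | h)
    exacts [hu.2 (h ▸ ht₁), h.2 rfl]
  have ht₁T₃ : t₁ ∉ T₃ := by
    rintro (h | h)
    exacts [hv.2 (h ▸ ht₁), ht₁T₂ h.1]
  have hT₂ : T₂.encard = n := (Set.encard_exchange hu.2 ht₁).trans hT₁
  have hT₃ : T₃.encard = n := by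
    refine (Set.encard_exchange (s := T₂) ?_ (Set.mem_insert_of_mem _ ⟨ht₂, ht₁₂.symm⟩)).trans hT₂
    rintro (h | h)
    exacts [huv h.symm, hv.2 h.1]
  have hT₂s : T₂ ⊆ s := Set.insert_subset hu.1 (Set.sdiff_subset.trans hT₁s)
  have hinter₂ : T₁ ∩ T₂ = T₁ \ {t₁} := by
    rw [Set.inter_insert_of_notMem hu.2, Set.inter_eq_right.2 Set.sdiff_subset]
  have hinter₃ : T₁ ∩ T₃ = (T₁ \ {t₁}) \ {t₂} := by
    rw [Set.inter_insert_of_notMem hv.2, ← Set.inter_sdiff_assoc, hinter₂]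
  refine ⟨T₁, hT₁s, T₂, hT₂s, T₃, Set.insert_subset hv.1 (Set.sdiff_subset.trans hT₂s), hT₁, hT₂,
    hT₃, fun h => ht₁T₂ (h ▸ ht₁), fun h => ht₁T₃ (h ▸ ht₁), ?_⟩
  rw [hinter₂, hinter₃]
  exact (Set.finite_of_encard_eq_coe hT₁).sdiff.sdiff.encard_lt_encard
    (Set.sdiff_singleton_ssubset.2 ⟨ht₂, ht₁₂.symm⟩)

namespace TwoPartiteDigraph

variable {V : Type*}

inductive Link
  | plus
  | minus
  | perp

def Link.flip : Link → Link
  | .plus => .minus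
  | .minus => .plus
  | .perp => .perp

@[simp]
lemma Link.flip_flip (k : Link) : k.flip.flip = k := by
  cases k <;> rfl

section Basic

variable (D : TwoPartiteDigraph V)

def nbhd : Link → V → Set V
  | .plus => D.Nplus
  | .minus => D.Nminus
  | .perp => D.perp

lemma mem_X_or_mem_Y (v : V) : v ∈ D.X ∨ v ∈ D.Y :=
  (D.cover.symm ▸ Set.mem_univ v : v ∈ D.X ∪ D.Y)

lemma mem_of_mem_nbhd {k : Link} {v w : V} (h : w ∈ D.nbhd k v) :
    (v ∈ D.X ∧ w ∈ D.Y) ∨ (v ∈ D.Y ∧ w ∈ D.X) := by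
  cases k
  · exact D.mem_of_edge v w h
  · exact (D.mem_of_edge w v h).symm.imp And.symm And.symm
  · exact h.1

variable {D}

lemma nbhd_subset_X {y : V} (hy : y ∈ D.Y) (k : Link) : D.nbhd k y ⊆ D.X := fun _ h =>
  ((D.mem_of_mem_nbhd h).resolve_left fun h' => D.disj.notMem_of_mem_left h'.1 hy).2

lemma nbhd_subset_Y {x : V} (hx : x ∈ D.X) (k : Link) : D.nbhd k x ⊆ D.Y := fun _ h =>
  ((D.mem_of_mem_nbhd h).resolve_right fun h' => D.disj.notMem_of_mem_left hx h'.1).2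

lemma eq_of_mem_nbhd {k j : Link} {v w : V} (hk : w ∈ D.nbhd k v) (hj : w ∈ D.nbhd j v) :
    k = j := by
  have := D.not_opposite v w
  have := D.not_opposite w v
  cases k <;> cases j <;> simp_all [nbhd, Nplus, Nminus, perp, Adj]

lemma mem_nbhd_flip {k : Link} {v w : V} : w ∈ D.nbhd k.flip v ↔ v ∈ D.nbhd k w := by
  cases k
  · exact Iff.rfl
  · exact Iff.rfl
  · simp only [Link.flip, nbhd, perp, Adj, Set.mem_ofPred_eq]
    tauto

lemma not_edge_of_mem_X {u v : V} (hu : u ∈ D.X) (hv : v ∈ D.X) : ¬ D.E u v := fun h =>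
  (D.mem_of_edge u v h).elim (fun h' => D.disj.notMem_of_mem_left hv h'.2)
    (fun h' => D.disj.notMem_of_mem_left hu h'.1)

lemma CompleteBip.edge_iff_not_edge (hcomp : D.CompleteBip) {u v : V}
    (h : (u ∈ D.X ∧ v ∈ D.Y) ∨ (u ∈ D.Y ∧ v ∈ D.X)) : D.E u v ↔ ¬ D.E v u := by
  refine ⟨D.not_opposite u v, fun h' => ?_⟩
  rcases h with ⟨hu, hv⟩ | ⟨hu, hv⟩
  exacts [(hcomp u hu v hv).resolve_right h', (hcomp v hv u hu).resolve_left h']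

end Basic

section Swap

variable (D : TwoPartiteDigraph V)

def swap : TwoPartiteDigraph V where
  X := D.Y
  Y := D.X
  cover := Set.union_comm D.X D.Y ▸ D.cover
  disj := D.disj.symm
  E := D.E
  mem_of_edge u v h := (D.mem_of_edge u v h).symm
  not_opposite := D.not_opposite

@[simp]
lemma perp_swap : D.swap.perp = D.perp := by
  ext v w
  simp only [perp, swap, Adj, Set.mem_ofPred_eq]
  tauto

@[simp]
lemma nbhd_swap (k : Link) : D.swap.nbhd k = D.nbhd k := by
  cases k
  · rfl
  · rfl
  · exact D.perp_swap

variable {D}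

lemma isAuto_swap {α : Equiv.Perm V} : D.swap.IsAuto α ↔ D.IsAuto α :=
  ⟨fun ⟨hX, hY, hE⟩ => ⟨hY, hX, hE⟩, fun ⟨hX, hY, hE⟩ => ⟨hY, hX, hE⟩⟩

lemma Homogeneous.swap (hD : D.Homogeneous) : D.swap.Homogeneous := by
  intro A hA φ ⟨hinj, hX, hY, hE⟩
  obtain ⟨α, hα, hαφ⟩ := hD A hA φ ⟨hinj, hY, hX, hE⟩
  exact ⟨α, isAuto_swap.2 hα, hαφ⟩

end Swap

section Automorphisms

variable {D : TwoPartiteDigraph V} {α : Equiv.Perm V}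

lemma IsAuto.mem_nbhd_iff (hα : D.IsAuto α) {k : Link} {v w : V} :
    α w ∈ D.nbhd k (α v) ↔ w ∈ D.nbhd k v := by
  obtain ⟨hX, hY, hE⟩ := hα
  cases k
  · exact (hE v w).symm
  · exact (hE w v).symm
  · simp only [nbhd, perp, Adj, Set.mem_ofPred_eq, ← hX, ← hY, ← hE]

lemma IsAuto.image_nbhd (hα : D.IsAuto α) (k : Link) (v : V) :
    α '' D.nbhd k v = D.nbhd k (α v) := by
  ext w
  refine ⟨?_, fun hw => ⟨α.symm w, hα.mem_nbhd_iff.1 (by simpa using hw), by simp⟩⟩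
  rintro ⟨u, hu, rfl⟩
  exact hα.mem_nbhd_iff.2 hu

lemma Homogeneous.exists_isAuto_eqOn_X (hD : D.Homogeneous) {S : Set V} {φ : V → V}
    (hS : S.Finite) (hSX : S ⊆ D.X) (hφ : S.InjOn φ) (hφX : S.MapsTo φ D.X) :
    ∃ α : Equiv.Perm V, D.IsAuto α ∧ S.EqOn α φ := by
  refine hD S hS φ ⟨hφ, fun a ha => iff_of_true (hSX ha) (hφX ha), fun a ha => ?_,
    fun a ha b hb => iff_of_false (not_edge_of_mem_X (hSX ha) (hSX hb))
      (not_edge_of_mem_X (hφX ha) (hφX hb))⟩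
  exact iff_of_false (D.disj.notMem_of_mem_left (hSX ha)) (D.disj.notMem_of_mem_left (hφX ha))

lemma Homogeneous.exists_isAuto_eqOn_Y (hD : D.Homogeneous) {S : Set V} {φ : V → V}
    (hS : S.Finite) (hSY : S ⊆ D.Y) (hφ : S.InjOn φ) (hφY : S.MapsTo φ D.Y) :
    ∃ α : Equiv.Perm V, D.IsAuto α ∧ S.EqOn α φ := by
  obtain ⟨α, hα, hαφ⟩ := hD.swap.exists_isAuto_eqOn_X hS hSY hφ hφY
  exact ⟨α, isAuto_swap.1 hα, hαφ⟩

lemma Homogeneous.exists_isAuto_apply_eq (hD : D.Homogeneous) {y y' : V} (hy : y ∈ D.Y)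
    (hy' : y' ∈ D.Y) : ∃ α : Equiv.Perm V, D.IsAuto α ∧ α y = y' := by
  obtain ⟨α, hα, hαφ⟩ := hD.exists_isAuto_eqOn_Y (Set.finite_singleton y)
    (Set.singleton_subset_iff.2 hy) (Set.injOn_singleton (fun _ => y') y) fun _ _ => hy'
  exact ⟨α, hα, hαφ rfl⟩

lemma Homogeneous.exists_isAuto_apply_eq_pair (hD : D.Homogeneous) {y₁ y₂ y₃ y₄ : V}
    (h₁ : y₁ ∈ D.Y) (h₂ : y₂ ∈ D.Y) (h₃ : y₃ ∈ D.Y) (h₄ : y₄ ∈ D.Y) (h₁₂ : y₁ ≠ y₂)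
    (h₃₄ : y₃ ≠ y₄) : ∃ α : Equiv.Perm V, D.IsAuto α ∧ α y₁ = y₃ ∧ α y₂ = y₄ := by
  classical
  let φ : V → V := fun v => if v = y₁ then y₃ else y₄
  obtain ⟨α, hα, hαφ⟩ := hD.exists_isAuto_eqOn_Y (φ := φ) (Set.toFinite {y₁, y₂})
    (Set.insert_subset h₁ (Set.singleton_subset_iff.2 h₂)) (by simp [φ, h₁₂.symm, h₃₄])
    (by rintro _ (rfl | rfl) <;> simp [φ, h₁₂.symm, h₃, h₄])
  exact ⟨α, hα, by simpa [φ] using hαφ (Set.mem_insert y₁ {y₂}),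
    by simpa [φ, h₁₂.symm] using hαφ (Set.mem_insert_of_mem y₁ rfl)⟩

lemma Homogeneous.encard_nbhd_eq (hD : D.Homogeneous) (k : Link) {y y' : V} (hy : y ∈ D.Y)
    (hy' : y' ∈ D.Y) : (D.nbhd k y).encard = (D.nbhd k y').encard := by
  obtain ⟨α, hα, rfl⟩ := hD.exists_isAuto_apply_eq hy hy'
  rw [← hα.image_nbhd, α.injective.encard_image]

lemma Homogeneous.encard_nbhd_inter_eq (hD : D.Homogeneous) (k : Link) {y₁ y₂ y₃ y₄ : V}
    (h₁ : y₁ ∈ D.Y) (h₂ : y₂ ∈ D.Y) (h₃ : y₃ ∈ D.Y) (h₄ : y₄ ∈ D.Y) (h₁₂ : y₁ ≠ y₂)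
    (h₃₄ : y₃ ≠ y₄) :
    (D.nbhd k y₁ ∩ D.nbhd k y₂).encard = (D.nbhd k y₃ ∩ D.nbhd k y₄).encard := by
  obtain ⟨α, hα, rfl, rfl⟩ := hD.exists_isAuto_apply_eq_pair h₁ h₂ h₃ h₄ h₁₂ h₃₄
  rw [← hα.image_nbhd, ← hα.image_nbhd, ← Set.image_inter α.injective,
    α.injective.encard_image]

end Automorphisms

section Occurrence

variable (D : TwoPartiteDigraph V)

def Occurs (k : Link) : Prop := ∃ y ∈ D.Y, (D.nbhd k y).Nonempty

def OccursTwice (k : Link) : Prop := ∃ y ∈ D.Y, 1 < (D.nbhd k y).encard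

variable {D}

lemma Occurs.swap {k : Link} (h : D.Occurs k.flip) : D.swap.Occurs k := by
  obtain ⟨y, hy, x, hx⟩ := h
  exact ⟨x, nbhd_subset_X hy _ hx, y, by simpa using mem_nbhd_flip.1 hx⟩

lemma Occurs.nbhd_nonempty (hD : D.Homogeneous) {k : Link} (h : D.Occurs k) :
    ∀ y ∈ D.Y, (D.nbhd k y).Nonempty := by
  intro y hy
  obtain ⟨y₀, hy₀, x, hx⟩ := h
  obtain ⟨α, hα, rfl⟩ := hD.exists_isAuto_apply_eq hy₀ hy
  exact ⟨α x, hα.mem_nbhd_iff.2 hx⟩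

lemma Occurs.exists_mem_nbhd (hD : D.Homogeneous) {k : Link} (h : D.Occurs k) :
    ∀ x ∈ D.X, ∃ y ∈ D.Y, x ∈ D.nbhd k y := by
  intro x hx
  obtain ⟨y, hy⟩ := (Occurs.swap (k := k.flip) (by simpa using h)).nbhd_nonempty hD.swap x hx
  rw [nbhd_swap] at hy
  exact ⟨y, nbhd_subset_Y hx _ hy, mem_nbhd_flip.1 hy⟩

lemma eq_of_not_occursTwice {k : Link} (h : ¬ D.OccursTwice k) {y x x' : V} (hy : y ∈ D.Y)
    (hx : x ∈ D.nbhd k y) (hx' : x' ∈ D.nbhd k y) : x = x' :=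
  Set.encard_le_one_iff.1 (not_lt.1 fun h' => h ⟨y, hy, h'⟩) x x' hx hx'

lemma Homogeneous.occursTwice_of_swap (hD : D.Homogeneous) {k j : Link} (hk : D.Occurs k)
    (hj : D.Occurs j) (hjk : j ≠ k) (h : D.swap.OccursTwice k.flip) : D.OccursTwice k := by
  by_contra hcon
  obtain ⟨x, hx, h⟩ := h
  obtain ⟨y₁, y₂, h₁, h₂, h₁₂⟩ := Set.one_lt_encard_iff.1 (by simpa using h)
  have hy₁ := nbhd_subset_Y hx _ h₁
  have hy₂ := nbhd_subset_Y hx _ h₂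
  rw [mem_nbhd_flip] at h₁ h₂
  obtain ⟨x', hx'⟩ := hj.nbhd_nonempty hD y₁ hy₁
  have hxx' : x' ≠ x := by
    rintro rfl
    exact hjk (eq_of_mem_nbhd hx' h₁)
  obtain ⟨y₃, hy₃, h₃⟩ := hk.exists_mem_nbhd hD x' (nbhd_subset_X hy₁ _ hx')
  have h₁₃ : y₁ ≠ y₃ := by
    rintro rfl
    exact hxx' (eq_of_not_occursTwice hcon hy₁ h₃ h₁)
  obtain ⟨α, hα, hα₁, hα₂⟩ := hD.exists_isAuto_apply_eq_pair hy₁ hy₂ hy₁ hy₃ h₁₂ h₁₃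
  have hαx : α x = x := eq_of_not_occursTwice hcon hy₁ (hα₁ ▸ hα.mem_nbhd_iff.2 h₁) h₁
  have h₃' : x ∈ D.nbhd k y₃ := hαx ▸ hα₂ ▸ hα.mem_nbhd_iff.2 h₂
  exact hxx' (eq_of_not_occursTwice hcon hy₃ h₃ h₃')

lemma Homogeneous.occursTwice_of_occurs (hD : D.Homogeneous) {k j l : Link} (hk : D.Occurs k)
    (hj : D.Occurs j) (hl : D.Occurs l) (hjk : j ≠ k) (hlk : l ≠ k) (hjl : j ≠ l) :
    D.OccursTwice k := by
  by_contra hcon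
  obtain ⟨y, hy, x, hx⟩ := hk
  obtain ⟨y₁, hy₁, h₁⟩ := hj.exists_mem_nbhd hD x (nbhd_subset_X hy _ hx)
  obtain ⟨y₂, hy₂, h₂⟩ := hl.exists_mem_nbhd hD x (nbhd_subset_X hy _ hx)
  have hy₁ne : y ≠ y₁ := by
    rintro rfl
    exact hjk (eq_of_mem_nbhd h₁ hx)
  have hy₂ne : y ≠ y₂ := by
    rintro rfl
    exact hlk (eq_of_mem_nbhd h₂ hx)
  obtain ⟨α, hα, hα₀, hα₁⟩ := hD.exists_isAuto_apply_eq_pair hy hy₁ hy hy₂ hy₁ne hy₂ne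
  have hαx : α x = x := eq_of_not_occursTwice hcon hy (hα₀ ▸ hα.mem_nbhd_iff.2 hx) hx
  exact hjl (eq_of_mem_nbhd (hαx ▸ hα₁ ▸ hα.mem_nbhd_iff.2 h₁) h₂)

end Occurrence

section Patterns

variable (D : TwoPartiteDigraph V)

def Realizes (S : Set V) (p : V → Link) (y : V) : Prop := ∀ x ∈ S, x ∈ D.nbhd (p x) y

variable {D}

lemma Homogeneous.exists_realizes_image (hD : D.Homogeneous) {S : Set V} {φ : V → V}
    {p : V → Link} {y : V} (hS : S.Finite) (hSX : S ⊆ D.X) (hφ : S.InjOn φ)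
    (hφX : S.MapsTo φ D.X) (hy : y ∈ D.Y) (h : D.Realizes S (p ∘ φ) y) :
    ∃ y' ∈ D.Y, D.Realizes (φ '' S) p y' := by
  obtain ⟨α, hα, hαφ⟩ := hD.exists_isAuto_eqOn_X hS hSX hφ hφX
  refine ⟨α y, (hα.2.1 y).1 hy, ?_⟩
  rintro _ ⟨x, hx, rfl⟩
  have := hα.mem_nbhd_iff.2 (h x hx)
  rwa [hαφ hx] at this

lemma Homogeneous.exists_subset_nbhd_of_encard_le (hD : D.Homogeneous) {k : Link}
    {S T : Set V} {y : V} (hy : y ∈ D.Y) (hS : S.Finite) (hSy : S ⊆ D.nbhd k y)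
    (hTX : T ⊆ D.X) (hTS : T.encard ≤ S.encard) : ∃ y' ∈ D.Y, T ⊆ D.nbhd k y' := by
  have : Nonempty V := ⟨y⟩
  obtain ⟨P, hPS, hP⟩ := Set.exists_subset_encard_eq hTS
  obtain ⟨φ, hφ⟩ := (hS.subset hPS).exists_bijOn_of_encard_eq hP
  obtain ⟨y', hy', h⟩ := hD.exists_realizes_image (p := fun _ => k) (hS.subset hPS)
    (hPS.trans (hSy.trans (nbhd_subset_X hy k))) hφ.injOn (hφ.mapsTo.mono_right hTX) hy
    fun x hx => hSy (hPS hx)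
  exact ⟨y', hy', fun x hx => h x (hφ.image_eq ▸ hx)⟩

lemma Homogeneous.not_sdiff_singleton_subset_nbhd (hD : D.Homogeneous) {i j : Link}
    (hj : D.OccursTwice j) (hij : i ≠ j) {y : V} (hy : y ∈ D.Y) (a : V) :
    ¬ D.X \ {a} ⊆ D.nbhd i y := by
  intro h
  obtain ⟨y', hy', h'⟩ := hj
  have hsub : D.nbhd j y ⊆ {a} := fun x hx => by
    by_contra hxa
    exact hij (eq_of_mem_nbhd (h ⟨nbhd_subset_X hy j hx, hxa⟩) hx)
  rw [hD.encard_nbhd_eq j hy' hy] at h'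
  exact (Set.encard_le_encard hsub).trans_eq (Set.encard_singleton a) |>.not_gt h'

lemma Homogeneous.encard_X_le_of_forall_eq_nbhd (hD : D.Homogeneous) {i : Link} {n : ℕ}
    (hn : 2 ≤ n) (h : ∀ T ⊆ D.X, T.encard = n → ∃ y ∈ D.Y, D.nbhd i y = T) :
    D.X.encard ≤ n + 1 := by
  by_contra hX
  obtain ⟨T₁, hT₁X, T₂, hT₂X, T₃, hT₃X, hT₁, hT₂, hT₃, h₁₂, h₁₃, hlt⟩ :=
    Set.exists_three_subsets_encard_eq hn (not_le.1 hX)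
  obtain ⟨y₁, hy₁, rfl⟩ := h T₁ hT₁X hT₁
  obtain ⟨y₂, hy₂, rfl⟩ := h T₂ hT₂X hT₂
  obtain ⟨y₃, hy₃, rfl⟩ := h T₃ hT₃X hT₃
  have := hD.encard_nbhd_inter_eq i hy₁ hy₂ hy₁ hy₃ (by rintro rfl; exact h₁₂ rfl)
    (by rintro rfl; exact h₁₃ rfl)
  exact hlt.ne this.symm

theorem Homogeneous.exists_subset_nbhd (hD : D.Homogeneous) {i j : Link} (hi : D.OccursTwice i)
    (hj : D.OccursTwice j) (hij : i ≠ j) {T : Set V} (hT : T.Finite) (hTX : T ⊆ D.X) :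
    ∃ y ∈ D.Y, T ⊆ D.nbhd i y := by
  obtain ⟨y₀, hy₀, h₀⟩ := hi
  obtain ⟨P, hP, hP2⟩ := Set.exists_subset_encard_eq (k := 2) (Order.add_one_le_of_lt h₀)
  have hsmall : ∀ T ⊆ D.X, T.encard ≤ 2 → ∃ y ∈ D.Y, T ⊆ D.nbhd i y := fun T hTX hT2 =>
    hD.exists_subset_nbhd_of_encard_le hy₀ (Set.finite_of_encard_eq_coe (k := 2) hP2) hP hTX
      (hP2 ▸ hT2)
  suffices ∀ n : ℕ, 2 ≤ n → ∀ T ⊆ D.X, T.encard ≤ n → ∃ y ∈ D.Y, T ⊆ D.nbhd i y from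
    this (max 2 T.ncard) (le_max_left _ _) T hTX
      (hT.cast_ncard_eq ▸ by exact_mod_cast le_max_right _ _)
  intro n hn
  induction n, hn using Nat.le_induction with
  | base => exact hsmall
  | succ n hn ih =>
    intro A hAX hA
    by_cases hAn : A.encard ≤ n
    · exact ih A hAX hAn
    have hAn : A.encard = n + 1 :=
      le_antisymm (by exact_mod_cast hA) (Order.add_one_le_of_lt (not_le.1 hAn))
    by_contra hno
    have hnbhd : ∀ T ⊆ D.X, T.encard = n → ∃ y ∈ D.Y, D.nbhd i y = T := by
      intro T hTX hT
      obtain ⟨y, hy, hsub⟩ := ih T hTX hT.le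
      refine ⟨y, hy, Set.Subset.antisymm (fun x hx => ?_) hsub⟩
      by_contra hxT
      refine hno (hD.exists_subset_nbhd_of_encard_le hy
        ((Set.finite_of_encard_eq_coe hT).insert x) (Set.insert_subset hx hsub) hAX ?_)
      rw [Set.encard_insert_of_notMem hxT, hT, hAn]
    have hAfin : A.Finite := Set.finite_of_encard_eq_coe (k := n + 1) (by simpa using hAn)
    have hXA : A = D.X :=
      hAfin.eq_of_subset_of_encard_le hAX (hAn ▸ hD.encard_X_le_of_forall_eq_nbhd hn hnbhd)
    obtain ⟨a, ha⟩ : A.Nonempty := Set.nonempty_of_encard_ne_zero (by simp [hAn])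
    obtain ⟨y, hy, hsub⟩ := ih (A \ {a}) (Set.sdiff_subset.trans hAX)
      (by rw [Set.encard_sdiff_singleton_of_mem ha, hAn]; simp)
    exact hD.not_sdiff_singleton_subset_nbhd hj hij hy a (hXA ▸ hsub)

lemma Homogeneous.exists_realizes_of_mem_nbhd (hD : D.Homogeneous) {S : Set V} {p : V → Link}
    {a x y : V} (hS : S.Finite) (hSX : S ⊆ D.X) (ha : a ∈ S) (hxS : x ∉ S) (hy : y ∈ D.Y)
    (h : D.Realizes (S \ {a}) p y) (hx : x ∈ D.nbhd (p a) y) :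
    ∃ y' ∈ D.Y, D.Realizes S p y' := by
  classical
  have hne : ∀ z ∈ S, z ≠ x := fun z hz h => hxS (h ▸ hz)
  have hmaps : (insert x (S \ {a})).MapsTo (Equiv.swap a x) D.X := by
    rintro z (rfl | ⟨hz, hza⟩)
    · rw [Equiv.swap_apply_right]
      exact hSX ha
    · rw [Equiv.swap_apply_of_ne_of_ne hza (hne z hz)]
      exact hSX hz
  have hreal : D.Realizes (insert x (S \ {a})) (p ∘ Equiv.swap a x) y := by
    rintro z (rfl | ⟨hz, hza⟩)
    · simpa using hx
    · simpa [Equiv.swap_apply_of_ne_of_ne hza (hne z hz)] using h z ⟨hz, hza⟩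
  obtain ⟨y', hy', h'⟩ := hD.exists_realizes_image (hS.sdiff.insert x)
    (Set.insert_subset (nbhd_subset_X hy _ hx) (Set.sdiff_subset.trans hSX))
    (Equiv.injective _).injOn hmaps hy hreal
  refine ⟨y', hy', fun z hz => h' z ?_⟩
  rcases eq_or_ne z a with rfl | hza
  · exact ⟨x, Set.mem_insert _ _, Equiv.swap_apply_right _ _⟩
  · exact ⟨z, Set.mem_insert_of_mem _ ⟨hz, hza⟩, Equiv.swap_apply_of_ne_of_ne hza (hne z hz)⟩

lemma Homogeneous.exists_realizes_of_sdiff (hD : D.Homogeneous) {S : Set V} {p : V → Link}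
    {a b y₁ y₂ : V} (hS : S.Finite) (hSX : S ⊆ D.X) (ha : a ∈ S) (hb : b ∈ S) (hab : p a ≠ p b)
    (hy₁ : y₁ ∈ D.Y) (h₁ : D.Realizes (S \ {a}) p y₁) (hy₂ : y₂ ∈ D.Y)
    (h₂ : D.Realizes (S \ {b}) p y₂) : ∃ y ∈ D.Y, D.Realizes S p y := by
  by_contra hno
  let Sa := {x ∈ S | p x = p a}
  have hsub₁ : D.nbhd (p a) y₁ ⊆ Sa \ {a} := by
    intro x hx
    by_cases hxS : x ∈ S
    · rcases eq_or_ne x a with rfl | hxa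
      · refine absurd ⟨y₁, hy₁, fun z hz => ?_⟩ hno
        rcases eq_or_ne z x with rfl | hzx
        exacts [hx, h₁ z ⟨hz, hzx⟩]
      · exact ⟨⟨hxS, eq_of_mem_nbhd (h₁ x ⟨hxS, hxa⟩) hx⟩, hxa⟩
    · exact absurd (hD.exists_realizes_of_mem_nbhd hS hSX ha hxS hy₁ h₁ hx) hno
  have hsub₂ : Sa ⊆ D.nbhd (p a) y₂ := by
    rintro x ⟨hxS, hx⟩
    refine hx ▸ h₂ x ⟨hxS, ?_⟩
    rintro rfl
    exact hab hx.symm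
  have hlt : (Sa \ {a}).encard < Sa.encard :=
    (hS.subset (Set.sep_subset _ _)).sdiff.encard_lt_encard
      (Set.sdiff_singleton_ssubset.2 ⟨ha, rfl⟩)
  exact ((Set.encard_le_encard hsub₁).trans_lt (hlt.trans_le (Set.encard_le_encard hsub₂))).ne
    (hD.encard_nbhd_eq _ hy₁ hy₂)

theorem Homogeneous.exists_realizes (hD : D.Homogeneous) {j l : Link} (hj : D.OccursTwice j)
    (hl : D.OccursTwice l) (hjl : j ≠ l) {S : Set V} {p : V → Link} (hS : S.Finite)
    (hSX : S ⊆ D.X) (hp : ∀ x ∈ S, D.OccursTwice (p x)) : ∃ y ∈ D.Y, D.Realizes S p y := by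
  suffices ∀ n, ∀ S : Set V, S.ncard = n → S.Finite → S ⊆ D.X →
      (∀ x ∈ S, D.OccursTwice (p x)) → ∃ y ∈ D.Y, D.Realizes S p y from
    this _ S rfl hS hSX hp
  intro n
  induction n using Nat.strong_induction_on with
  | _ n ih =>
  intro S hn hS hSX hp
  by_cases hmix : ∃ a ∈ S, ∃ b ∈ S, p a ≠ p b
  · obtain ⟨a, ha, b, hb, hab⟩ := hmix
    have hsmaller : ∀ c ∈ S, ∃ y ∈ D.Y, D.Realizes (S \ {c}) p y := fun c hc =>
      ih _ (hn ▸ Set.ncard_sdiff_singleton_lt_of_mem hc hS) _ rfl hS.sdiff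
        (Set.sdiff_subset.trans hSX) fun x hx => hp x hx.1
    obtain ⟨y₁, hy₁, h₁⟩ := hsmaller a ha
    obtain ⟨y₂, hy₂, h₂⟩ := hsmaller b hb
    exact hD.exists_realizes_of_sdiff hS hSX ha hb hab hy₁ h₁ hy₂ h₂
  push Not at hmix
  rcases S.eq_empty_or_nonempty with rfl | ⟨a, ha⟩
  · obtain ⟨y, hy, -⟩ := hj
    exact ⟨y, hy, fun x hx => hx.elim⟩
  obtain ⟨k, hk, hak⟩ : ∃ k, D.OccursTwice k ∧ p a ≠ k := by
    by_cases h : p a = j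
    · exact ⟨l, hl, h ▸ hjl⟩
    · exact ⟨j, hj, h⟩
  obtain ⟨y, hy, hsub⟩ := hD.exists_subset_nbhd (hp a ha) hk hak hS hSX
  exact ⟨y, hy, fun x hx => hmix a ha x hx ▸ hsub hx⟩

end Patterns

section Classification

variable {D : TwoPartiteDigraph V}

lemma occurs_plus_and_minus_of_not_bipartite (hnb : ¬ D.Bipartite) :
    D.Occurs .plus ∧ D.Occurs .minus := by
  simp only [Bipartite, not_or, not_forall] at hnb
  obtain ⟨⟨u₁, v₁, he₁, hu₁⟩, ⟨u₂, v₂, he₂, hu₂⟩⟩ := hnb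
  exact ⟨⟨u₁, (D.mem_X_or_mem_Y u₁).resolve_left hu₁, v₁, he₁⟩,
    ⟨v₂, ((D.mem_of_edge u₂ v₂ he₂).resolve_right fun h => hu₂ h.1).2, u₂, he₂⟩⟩

lemma occurs_perp_of_not_completeBip (hcomp : ¬ D.CompleteBip) : D.Occurs .perp := by
  simp only [CompleteBip, not_forall] at hcomp
  obtain ⟨x, hx, y, hy, h⟩ := hcomp
  exact ⟨y, hy, x, ⟨Or.inr ⟨hy, hx⟩, fun h' => h h'.symm⟩⟩

lemma Homogeneous.two_le_mk_X (hD : D.Homogeneous) (hplus : D.Occurs .plus)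
    (hminus : D.Occurs .minus) : 2 ≤ Cardinal.mk D.X := by
  obtain ⟨y, hy, x₁, h₁⟩ := hplus
  obtain ⟨x₂, h₂⟩ := hminus.nbhd_nonempty hD y hy
  refine Cardinal.two_le_iff.2 ⟨⟨x₁, nbhd_subset_X hy _ h₁⟩, ⟨x₂, nbhd_subset_X hy _ h₂⟩, ?_⟩
  rintro ⟨⟩
  cases eq_of_mem_nbhd h₁ h₂

lemma Homogeneous.occursTwice_of_forall_occurs (hD : D.Homogeneous) (h : ∀ k, D.Occurs k) :
    ∀ k, D.OccursTwice k := by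
  rintro (_ | _ | _)
  · exact hD.occursTwice_of_occurs (h _) (h .minus) (h .perp) nofun nofun nofun
  · exact hD.occursTwice_of_occurs (h _) (h .plus) (h .perp) nofun nofun nofun
  · exact hD.occursTwice_of_occurs (h _) (h .plus) (h .minus) nofun nofun nofun

lemma Homogeneous.exists_subset_Nplus_Nminus_perp (hD : D.Homogeneous)
    (hplus : D.OccursTwice .plus) (hminus : D.OccursTwice .minus) {A B C : Set V}
    (hA : A.Finite) (hB : B.Finite) (hC : C.Finite) (hAX : A ⊆ D.X) (hBX : B ⊆ D.X)
    (hCX : C ⊆ D.X) (hAB : Disjoint A B) (hAC : Disjoint A C) (hBC : Disjoint B C)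
    (hperp : C.Nonempty → D.OccursTwice .perp) :
    ∃ y ∈ D.Y, A ⊆ D.Nplus y ∧ B ⊆ D.Nminus y ∧ C ⊆ D.perp y := by
  classical
  let p : V → Link := fun x => if x ∈ A then .plus else if x ∈ B then .minus else .perp
  have hpA : ∀ x ∈ A, p x = .plus := fun x hx => if_pos hx
  have hpB : ∀ x ∈ B, p x = .minus := fun x hx => by
    simp [p, hx, hAB.notMem_of_mem_right hx]
  have hpC : ∀ x ∈ C, p x = .perp := fun x hx => by
    simp [p, hAC.notMem_of_mem_right hx, hBC.notMem_of_mem_right hx]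
  have hp : ∀ x ∈ A ∪ B ∪ C, D.OccursTwice (p x) := by
    rintro x ((hx | hx) | hx)
    · rwa [hpA x hx]
    · rwa [hpB x hx]
    · rw [hpC x hx]
      exact hperp ⟨x, hx⟩
  obtain ⟨y, hy, h⟩ := hD.exists_realizes hplus hminus nofun ((hA.union hB).union hC)
    (Set.union_subset (Set.union_subset hAX hBX) hCX) hp
  refine ⟨y, hy, fun x hx => ?_, fun x hx => ?_, fun x hx => ?_⟩
  · simpa [hpA x hx, nbhd] using h x (.inl (.inl hx))
  · simpa [hpB x hx, nbhd] using h x (.inl (.inr hx))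
  · simpa [hpC x hx, nbhd] using h x (.inr hx)

theorem Homogeneous.isGeneric_of_completeBip (hD : D.Homogeneous) (hcomp : D.CompleteBip)
    (hplus : D.Occurs .plus) (hminus : D.Occurs .minus) (hplus₂ : D.OccursTwice .plus)
    (hplus₂' : D.swap.OccursTwice .plus) : D.IsGeneric := by
  have hminus₂ : D.OccursTwice .minus := hD.occursTwice_of_swap hminus hplus nofun hplus₂'
  have hminus₂' : D.swap.OccursTwice .minus :=
    hD.swap.occursTwice_of_swap (k := .minus) (j := .plus) (Occurs.swap hplus)
      (Occurs.swap hminus) nofun hplus₂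
  refine ⟨hcomp, fun AX BX hA hB hAX hBX hAB AY BY hA' hB' hAY hBY hAB' => ⟨?_, ?_⟩⟩
  · obtain ⟨y, hy, h₁, h₂, -⟩ := hD.exists_subset_Nplus_Nminus_perp hplus₂ hminus₂ hA hB
      Set.finite_empty hAX hBX (Set.empty_subset _) hAB (Set.disjoint_empty _)
      (Set.disjoint_empty _) (absurd · Set.not_nonempty_empty)
    exact ⟨y, hy, h₁, h₂⟩
  · obtain ⟨x, hx, h₁, h₂, -⟩ := hD.swap.exists_subset_Nplus_Nminus_perp hplus₂' hminus₂' hA' hB'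
      Set.finite_empty hAY hBY (Set.empty_subset _) hAB' (Set.disjoint_empty _)
      (Set.disjoint_empty _) (absurd · Set.not_nonempty_empty)
    exact ⟨x, hx, h₁, h₂⟩

theorem Homogeneous.isGenericOrientation_of_not_completeBip (hD : D.Homogeneous)
    (hcomp : ¬ D.CompleteBip) (hplus : D.Occurs .plus) (hminus : D.Occurs .minus) :
    D.IsGenericOrientation := by
  have hocc : ∀ k, D.Occurs k := by
    rintro (_ | _ | _)
    exacts [hplus, hminus, occurs_perp_of_not_completeBip hcomp]
  have h := hD.occursTwice_of_forall_occurs hocc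
  have h' := hD.swap.occursTwice_of_forall_occurs fun k => Occurs.swap (hocc k.flip)
  intro AX BX CX hA hB hC hAX hBX hCX hAB hAC hBC AY BY CY hA' hB' hC' hAY hBY hCY hAB' hAC' hBC'
  refine ⟨hD.exists_subset_Nplus_Nminus_perp (h _) (h _) hA hB hC hAX hBX hCX hAB hAC hBC
    fun _ => h _, ?_⟩
  obtain ⟨x, hx, h₁, h₂, h₃⟩ := hD.swap.exists_subset_Nplus_Nminus_perp (h' _) (h' _) hA' hB' hC'
    hAY hBY hCY hAB' hAC' hBC' fun _ => h' _
  exact ⟨x, hx, h₁, h₂, D.perp_swap ▸ h₃⟩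

lemma Homogeneous.exists_bijOn_of_not_occursTwice (hD : D.Homogeneous) {k : Link}
    (hk : D.Occurs k) (h : ¬ D.OccursTwice k) (h' : ¬ D.swap.OccursTwice k.flip) :
    ∃ m : V → V, Set.BijOn m D.X D.Y ∧ ∀ x ∈ D.X, ∀ y ∈ D.Y, x ∈ D.nbhd k y ↔ y = m x := by
  choose! m hmY hm using hk.exists_mem_nbhd hD
  have hm_unique : ∀ x ∈ D.X, ∀ y, x ∈ D.nbhd k y → y = m x := by
    intro x hx y hxy
    refine eq_of_not_occursTwice h' (y := x) hx ?_ ?_ <;> rw [nbhd_swap, mem_nbhd_flip]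
    exacts [hxy, hm x hx]
  refine ⟨m, ⟨hmY, fun x₁ hx₁ x₂ hx₂ he => ?_, fun y hy => ?_⟩,
    fun x hx y _ => ⟨hm_unique x hx y, fun he => he ▸ hm x hx⟩⟩
  · exact eq_of_not_occursTwice h (hmY x₁ hx₁) (hm x₁ hx₁) (he ▸ hm x₂ hx₂)
  · obtain ⟨x, hx⟩ := hk.nbhd_nonempty hD y hy
    exact ⟨x, nbhd_subset_X hy _ hx, (hm_unique x (nbhd_subset_X hy _ hx) y hx).symm⟩

theorem Homogeneous.isM_of_not_occursTwice (hD : D.Homogeneous) (hcomp : D.CompleteBip)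
    (hplus : D.Occurs .plus) (hminus : D.Occurs .minus)
    (h : ¬ D.OccursTwice .plus ∨ ¬ D.swap.OccursTwice .plus) : D.IsM := by
  rcases h with hplus₁ | hplus₁'
  · obtain ⟨m, hm, hmk⟩ := hD.exists_bijOn_of_not_occursTwice hplus hplus₁
      fun h => hplus₁ (hD.occursTwice_of_swap hplus hminus nofun h)
    refine ⟨m, hm, .inr fun x hx y hy => ⟨hmk x hx y hy, ?_⟩⟩
    exact (hcomp.edge_iff_not_edge (.inl ⟨hx, hy⟩)).trans (not_congr (hmk x hx y hy))
  · have hminus₁ : ¬ D.OccursTwice .minus := fun h => hplus₁' <|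
      hD.swap.occursTwice_of_swap (k := .plus) (j := .minus) (Occurs.swap hminus)
        (Occurs.swap hplus) nofun h
    obtain ⟨m, hm, hmk⟩ := hD.exists_bijOn_of_not_occursTwice hminus hminus₁ hplus₁'
    refine ⟨m, hm, .inl fun x hx y hy => ⟨hmk x hx y hy, ?_⟩⟩
    exact (hcomp.edge_iff_not_edge (.inr ⟨hy, hx⟩)).trans (not_congr (hmk x hx y hy))

end Classification

end TwoPartiteDigraph

/-- Every homogeneous non-bipartite 2-partite digraph is isomorphic to `M_κ` for some
cardinal `κ ≥ 2`, or is a generic 2-partite digraph, or is a generic orientation of a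
generic bipartite graph. -/
theorem stmt_16 {V : Type*} (D : TwoPartiteDigraph V) (hhom : D.Homogeneous)
    (hnb : ¬ D.Bipartite) :
    (D.IsM ∧ 2 ≤ Cardinal.mk D.X) ∨ D.IsGeneric ∨ D.IsGenericOrientation := by
  obtain ⟨hplus, hminus⟩ := occurs_plus_and_minus_of_not_bipartite hnb
  by_cases hcomp : D.CompleteBip
  · by_cases h : D.OccursTwice .plus ∧ D.swap.OccursTwice .plus
    · exact .inr (.inl (hhom.isGeneric_of_completeBip hcomp hplus hminus h.1 h.2))
    · exact .inl ⟨hhom.isM_of_not_occursTwice hcomp hplus hminus (not_and_or.1 h),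
        hhom.two_le_mk_X hplus hminus⟩
  · exact .inr (.inr (hhom.isGenericOrientation_of_not_completeBip hcomp hplus hminus))
end

section
/- Let D = (X,Y,E) be a homogeneous 2-partite digraph that is not bipartite, let u ∈ X have exactly one successor, infinitely many predecessors, and u^⊥ = ∅. Then D ≅ M_{|Y|}. -/
open TwoPartiteDigraph

namespace TwoPartiteDigraph

variable {V : Type*} (D : TwoPartiteDigraph V)

lemma notY_of_X {v : V} (hv : v ∈ D.X) : v ∉ D.Y :=
  Set.disjoint_left.mp D.disj hv

lemma notX_of_Y {v : V} (hv : v ∈ D.Y) : v ∉ D.X :=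
  Set.disjoint_right.mp D.disj hv

lemma not_E_XX {v w : V} (hv : v ∈ D.X) (hw : w ∈ D.X) : ¬ D.E v w := by
  intro h
  rcases D.mem_of_edge v w h with ⟨_, h2⟩ | ⟨h1, _⟩
  · exact D.notY_of_X hw h2
  · exact D.notY_of_X hv h1

/-- Homogeneity gives transitivity within a side. -/
lemma exists_auto (hhom : D.Homogeneous) {a b : V}
    (hab : (a ∈ D.X ∧ b ∈ D.X) ∨ (a ∈ D.Y ∧ b ∈ D.Y)) :
    ∃ α : Equiv.Perm V, D.IsAuto α ∧ α a = b := by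
  have hiso : D.IsPartialIso {a} (fun _ => b) := by
    refine ⟨?_, ?_, ?_, ?_⟩
    · intro x hx y hy _
      simp only [Set.mem_singleton_iff] at hx hy; rw [hx, hy]
    · intro x hx
      simp only [Set.mem_singleton_iff] at hx; subst hx
      rcases hab with ⟨h1, h2⟩ | ⟨h1, h2⟩
      · simp [h1, h2]
      · simp [D.notX_of_Y h1, D.notX_of_Y h2]
    · intro x hx
      simp only [Set.mem_singleton_iff] at hx; subst hx
      rcases hab with ⟨h1, h2⟩ | ⟨h1, h2⟩
      · simp [D.notY_of_X h1, D.notY_of_X h2]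
      · simp [h1, h2]
    · have h1 : ¬ D.E a a := by
        intro h
        rcases D.mem_of_edge a a h with ⟨h1, h2⟩ | ⟨h1, h2⟩
        exacts [D.notY_of_X h1 h2, D.notY_of_X h2 h1]
      have h2 : ¬ D.E b b := by
        intro h
        rcases D.mem_of_edge b b h with ⟨h1, h2⟩ | ⟨h1, h2⟩
        exacts [D.notY_of_X h1 h2, D.notY_of_X h2 h1]
      intro x hx y hy
      simp only [Set.mem_singleton_iff] at hx hy
      rw [hx, hy]
      simp [h1, h2]
  obtain ⟨α, hα, he⟩ := hhom {a} (Set.finite_singleton a) (fun _ => b) hiso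
  exact ⟨α, hα, he a rfl⟩

end TwoPartiteDigraph

/-- If `D` is a homogeneous non-bipartite 2-partite digraph and `u ∈ X` has exactly
one successor, infinitely many predecessors and `u^⊥ = ∅`, then `D ≅ M_{|Y|}`. -/
theorem stmt_18 {V : Type*} (D : TwoPartiteDigraph V) (hhom : D.Homogeneous)
    (hnb : ¬ D.Bipartite) (u : V) (hu : u ∈ D.X)
    (hsucc : ∃! y, D.E u y) (hpred : (D.Nminus u).Infinite) (hperp : D.perp u = ∅) :
    D.IsM := by
  classical
  obtain ⟨y₀, hy₀, huniq⟩ := hsucc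
  have hy₀Y : y₀ ∈ D.Y := by
    rcases D.mem_of_edge u y₀ hy₀ with ⟨_, h⟩ | ⟨h, _⟩
    · exact h
    · exact absurd h (D.notY_of_X hu)
  -- properties of u
  have hu2 : ∀ y ∈ D.Y, (D.E y u ↔ y ≠ y₀) := by
    intro y hy
    constructor
    · rintro h rfl
      exact D.not_opposite u y hy₀ h
    · intro hne
      have hnp : y ∉ D.perp u := by rw [hperp]; exact Set.notMem_empty y
      simp only [perp, Set.mem_setOf_eq, not_and, not_not] at hnp
      have hadj : D.Adj u y := hnp (Or.inl ⟨hu, hy⟩)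
      rcases hadj with h | h
      · exact absurd (huniq y h) hne
      · exact h
  -- every x ∈ X has the same local structure
  have hP : ∀ x : V, ∃ yx, x ∈ D.X →
      yx ∈ D.Y ∧ ∀ y ∈ D.Y, (D.E x y ↔ y = yx) ∧ (D.E y x ↔ y ≠ yx) := by
    intro x
    by_cases hx : x ∈ D.X
    · obtain ⟨α, hα, hαu⟩ := D.exists_auto hhom (Or.inl ⟨hu, hx⟩)
      refine ⟨α y₀, fun _ => ⟨(hα.2.1 y₀).mp hy₀Y, ?_⟩⟩
      intro y hy
      have hz : α.symm y ∈ D.Y := by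
        have := hα.2.1 (α.symm y)
        rw [Equiv.apply_symm_apply] at this
        exact this.mpr hy
      have key1 : D.E x y ↔ D.E u (α.symm y) := by
        rw [hα.2.2 u (α.symm y), hαu, Equiv.apply_symm_apply]
      have key2 : D.E y x ↔ D.E (α.symm y) u := by
        rw [hα.2.2 (α.symm y) u, hαu, Equiv.apply_symm_apply]
      have key3 : α.symm y = y₀ ↔ y = α y₀ := by
        constructor
        · intro h; rw [← h, Equiv.apply_symm_apply]
        · intro h; rw [h, Equiv.symm_apply_apply]
      constructor
      · rw [key1, ← key3]
        exact ⟨fun h => huniq _ h, fun h => h ▸ hy₀⟩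
      · rw [key2, hu2 _ hz, not_iff_not, key3]
    · exact ⟨x, fun h => absurd h hx⟩
  choose m hm using hP
  have hmY : ∀ x ∈ D.X, m x ∈ D.Y := fun x hx => (hm x hx).1
  have hmE1 : ∀ x ∈ D.X, ∀ y ∈ D.Y, (D.E x y ↔ y = m x) :=
    fun x hx y hy => ((hm x hx).2 y hy).1
  have hmE2 : ∀ x ∈ D.X, ∀ y ∈ D.Y, (D.E y x ↔ y ≠ m x) :=
    fun x hx y hy => ((hm x hx).2 y hy).2
  have hEmx : ∀ x ∈ D.X, D.E x (m x) :=
    fun x hx => (hmE1 x hx (m x) (hmY x hx)).mpr rfl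
  -- Y is infinite
  have hYinf : D.Y.Infinite := by
    refine hpred.mono ?_
    intro w hw
    rcases D.mem_of_edge w u hw with ⟨_, h⟩ | ⟨h, _⟩
    · exact absurd h (D.notY_of_X hu)
    · exact h
  -- surjectivity
  have hsurj : ∀ y ∈ D.Y, ∃ x ∈ D.X, m x = y := by
    intro y hy
    obtain ⟨β, hβ, hβm⟩ := D.exists_auto hhom (Or.inr ⟨hmY u hu, hy⟩)
    refine ⟨β u, (hβ.1 u).mp hu, ?_⟩
    have hE : D.E (β u) y := by
      have := (hβ.2.2 u (m u)).mp (hEmx u hu)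
      rwa [hβm] at this
    exact ((hmE1 (β u) ((hβ.1 u).mp hu) y hy).mp hE).symm
  -- injectivity
  have hinj : ∀ x₁ ∈ D.X, ∀ x₂ ∈ D.X, m x₁ = m x₂ → x₁ = x₂ := by
    intro x₁ hx₁ x₂ hx₂ hmm
    by_contra hne
    set y := m x₁ with hydef
    have hyY : y ∈ D.Y := hmY x₁ hx₁
    obtain ⟨y', hy'⟩ := (hYinf.diff (Set.finite_singleton y)).nonempty
    obtain ⟨hy'Y, hy'ne⟩ := hy'
    rw [Set.mem_singleton_iff] at hy'ne
    obtain ⟨x', hx', hmx'⟩ := hsurj y' hy'Y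
    have hx'1 : x' ≠ x₁ := by
      rintro rfl; exact hy'ne (hmx' ▸ rfl)
    have hx'2 : x' ≠ x₂ := by
      rintro rfl; rw [← hmm] at hmx'; exact hy'ne (hmx' ▸ rfl)
    set φ : V → V := fun v => if v = x₂ then x' else if v = x' then x₂ else v with hφ
    have hinv : Function.Involutive φ := by
      intro v
      by_cases h1 : v = x₂
      · simp [hφ, h1, hx'2, Ne.symm hx'2]
      · by_cases h2 : v = x'
        · simp [hφ, h1, h2]
        · simp [hφ, h1, h2]
    have hne2 : x₁ ≠ x' := Ne.symm hx'1
    have hφ1 : φ x₁ = x₁ := by simp [hφ, hne, hne2]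
    have hφ2 : φ x₂ = x' := by simp [hφ]
    have hφ3 : φ x' = x₂ := by simp [hφ, hx'2]
    have hmemA : ∀ a ∈ ({x₁, x₂, x'} : Set V), a ∈ D.X ∧ φ a ∈ D.X := by
      intro a ha
      rcases ha with rfl | rfl | rfl
      · exact ⟨hx₁, by rw [hφ1]; exact hx₁⟩
      · exact ⟨hx₂, by rw [hφ2]; exact hx'⟩
      · exact ⟨hx', by rw [hφ3]; exact hx₂⟩
    have hiso : D.IsPartialIso {x₁, x₂, x'} φ := by
      refine ⟨fun a _ b _ h => hinv.injective h, ?_, ?_, ?_⟩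
      · intro a ha
        obtain ⟨h1, h2⟩ := hmemA a ha
        simp [h1, h2]
      · intro a ha
        obtain ⟨h1, h2⟩ := hmemA a ha
        simp [D.notY_of_X h1, D.notY_of_X h2]
      · intro a ha b hb
        obtain ⟨h1, h2⟩ := hmemA a ha
        obtain ⟨h3, h4⟩ := hmemA b hb
        simp [D.not_E_XX h1 h3, D.not_E_XX h2 h4]
    obtain ⟨α, hα, hαe⟩ := hhom {x₁, x₂, x'} (Set.toFinite _) φ hiso
    have hα1 : α x₁ = x₁ := by rw [hαe x₁ (by simp), hφ1]
    have hα2 : α x₂ = x' := by rw [hαe x₂ (by simp), hφ2]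
    have hαyY : α y ∈ D.Y := (hα.2.1 y).mp hyY
    have hE1 : D.E x₁ (α y) := by
      have := (hα.2.2 x₁ y).mp (hEmx x₁ hx₁)
      rwa [hα1] at this
    have hE2 : D.E x' (α y) := by
      have hE2' : D.E x₂ y := (hmE1 x₂ hx₂ y hyY).mpr hmm
      have := (hα.2.2 x₂ y).mp hE2'
      rwa [hα2] at this
    have h1 : α y = y := (hmE1 x₁ hx₁ (α y) hαyY).mp hE1
    have h2 : α y = y' := by
      rw [← hmx']
      exact (hmE1 x' hx' (α y) hαyY).mp hE2
    exact hy'ne (by rw [← h1, h2])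
  refine ⟨m, ⟨hmY, fun a ha b hb h => hinj a ha b hb h, ?_⟩, Or.inl ?_⟩
  · intro y hy
    obtain ⟨x, hx, hmx⟩ := hsurj y hy
    exact ⟨x, hx, hmx⟩
  · intro x hx y hy
    exact ⟨hmE1 x hx y hy, hmE2 x hx y hy⟩
end
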